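/- arXiv:math/0402364 — 2 statements merged into one kernel-verified Lean document; each statement's English description precedes it below -/
import Mathlib

section
/- Let K be a densely defined closed operator from E₁ to E₂ with trivial kernel, let S be the isometric closure of K(K*K)^{-1/2}. Then for every x in the domain of (K*K)^{-1/2}, one has K* S (K*K)^{-1/2} x = x. -/
open LinearPMap InnerProductSpace

/-!
For `d` in the domain of `K*K` we have `d ∈ dom R²`, hence
`⟪S y, K d⟫ = ⟪S y, S (R d)⟫ = ⟪y, R d⟫ = ⟪R y, d⟫`: the identity `K* (S y) = R y` holds when
tested against `dom K*K`. It extends to all of `dom K` because `dom K*K` is a core of the closed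
operator `K`. Indeed, splitting `(-R y, S y) = (x, K x) + (K* w, -w)` along von Neumann's
decomposition, the test against `dom K*K` says `⟪x, d⟫ + ⟪K x, K d⟫ = 0` there; choosing `d` with
`d + K*K d = x` (possible as `1 + K*K` is onto) gives `‖x‖² = 0`, so `S y = -w ∈ dom K*`.
-/

namespace LinearPMap

variable {𝕜 E F : Type*} [RCLike 𝕜]
  [NormedAddCommGroup E] [InnerProductSpace 𝕜 E] [CompleteSpace E]
  [NormedAddCommGroup F] [InnerProductSpace 𝕜 F] [CompleteSpace F]
  {T : E →ₗ.[𝕜] F}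

theorem _root_.IsSelfAdjoint.isFormalAdjoint {A : E →ₗ.[𝕜] E} (hA : IsSelfAdjoint A) :
    A.IsFormalAdjoint A := by
  have h := adjoint_isFormalAdjoint hA.dense_domain
  rwa [isSelfAdjoint_def.mp hA] at h

/-- Von Neumann's decomposition: in `E × F` with the `L²` inner product, the orthogonal complement
of the graph of `T` is `{(T† w, -w)}`, the graph of `T†` rotated by a right angle. -/
theorem IsClosed.exists_graph_add_adjoint_graph (hT : T.IsClosed)
    (hdense : Dense (T.domain : Set E)) (z : E × F) :
    ∃ (x : T.domain) (w : T†.domain), (x : E) + T† w = z.1 ∧ T x - w = z.2 := by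
  set G : Submodule 𝕜 (WithLp 2 (E × F)) :=
    T.graph.comap (WithLp.linearEquiv 2 𝕜 (E × F)).toLinearMap
  have : CompleteSpace G :=
    (hT.preimage (WithLp.prodContinuousLinearEquiv 2 𝕜 E F).continuous).completeSpace_coe
  obtain ⟨g, hg, v, hv, hz⟩ := G.exists_add_mem_mem_orthogonal (WithLp.toLp 2 z)
  obtain ⟨x, hx₁, hx₂⟩ := T.mem_graph_iff.mp hg
  have hv' : (-v.ofLp.2, v.ofLp.1) ∈ T†.graph := by
    rw [adjoint_graph_eq_graph_adjoint hdense, Submodule.mem_adjoint_iff]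
    intro a b hab
    have := G.inner_right_of_mem_orthogonal (u := WithLp.toLp 2 (a, b)) hab hv
    rw [WithLp.prod_inner_apply] at this
    rw [inner_neg_right]
    linear_combination -this
  obtain ⟨w, hw₁, hw₂⟩ := T†.mem_graph_iff.mp hv'
  refine ⟨x, w, ?_, ?_⟩
  · simpa [hx₁, hw₂] using (congrArg WithLp.fst hz).symm
  · simpa [hx₂, hw₁] using (congrArg WithLp.snd hz).symm

theorem IsClosed.exists_add_adjoint_apply_eq (hT : T.IsClosed)
    (hdense : Dense (T.domain : Set E)) (z : E) :
    ∃ (x : T.domain) (hx : T x ∈ T†.domain), (x : E) + T† ⟨T x, hx⟩ = z := by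
  obtain ⟨x, w, h₁, h₂⟩ := hT.exists_graph_add_adjoint_graph hdense (z, 0)
  obtain ⟨w, hw⟩ := w
  obtain rfl : w = T x := (sub_eq_zero.mp h₂).symm
  exact ⟨x, hw, h₁⟩

theorem IsClosed.eq_zero_of_forall_inner_add_inner_eq_zero (hT : T.IsClosed)
    (hdense : Dense (T.domain : Set E)) (x : T.domain)
    (h : ∀ d : T.domain, T d ∈ T†.domain → ⟪(x : E), (d : E)⟫_𝕜 + ⟪T x, T d⟫_𝕜 = 0) :
    (x : E) = 0 := by
  obtain ⟨d, hd, hsum⟩ := hT.exists_add_adjoint_apply_eq hdense x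
  have hadj : ⟪T x, T d⟫_𝕜 = ⟪(x : E), T† ⟨T d, hd⟩⟫_𝕜 :=
    (adjoint_isFormalAdjoint hdense).symm x ⟨T d, hd⟩
  rw [← inner_self_eq_zero (𝕜 := 𝕜), ← h d hd, hadj, ← inner_add_right, hsum]

theorem IsClosed.exists_adjoint_apply_eq (hT : T.IsClosed)
    (hdense : Dense (T.domain : Set E)) {u : E} {v : F}
    (h : ∀ d : T.domain, T d ∈ T†.domain → ⟪u, (d : E)⟫_𝕜 = ⟪v, T d⟫_𝕜) :
    ∃ hv : v ∈ T†.domain, T† ⟨v, hv⟩ = u := by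
  obtain ⟨x, w, h₁, h₂⟩ := hT.exists_graph_add_adjoint_graph hdense (-u, v)
  obtain rfl : u = -((x : E) + T† w) := by rw [h₁, neg_neg]
  obtain rfl : v = T x - w := h₂.symm
  have hx : x = 0 := Subtype.ext <| hT.eq_zero_of_forall_inner_add_inner_eq_zero hdense x
    fun d hd => by
      have hadj : ⟪T† w, (d : E)⟫_𝕜 = ⟪(w : F), T d⟫_𝕜 :=
        adjoint_isFormalAdjoint hdense w d
      have hd' := h d hd
      rw [inner_neg_left, inner_add_left, inner_sub_left, hadj] at hd'
      linear_combination -hd'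
  subst hx
  simp only [ZeroMemClass.coe_zero, zero_add, map_zero, zero_sub]
  exact ⟨(-w).2, T†.map_neg w⟩

end LinearPMap

theorem adjoint_comp_isometry_inv_sqrt_general
    {E₁ E₂ : Type*}
    [NormedAddCommGroup E₁] [InnerProductSpace ℝ E₁] [CompleteSpace E₁]
    [NormedAddCommGroup E₂] [InnerProductSpace ℝ E₂] [CompleteSpace E₂]
    (K : E₁ →ₗ.[ℝ] E₂)
    (hdense : Dense (K.domain : Set E₁))
    (hclosed : K.IsClosed)
    -- `R` plays the role of `(K*K)^{1/2}` :
    (R : E₁ →ₗ.[ℝ] E₁)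
    (hRsa : IsSelfAdjoint R)
    (hdom : ∀ x : E₁,
      (∃ h : x ∈ R.domain, R ⟨x, h⟩ ∈ R.domain) ↔
      (∃ h : x ∈ K.domain, K ⟨x, h⟩ ∈ K.adjoint.domain))
    -- `S` is the isometric closure of `K ∘ R⁻¹` :
    (S : E₁ →L[ℝ] E₂)
    (hSiso : ∀ y : E₁, ‖S y‖ = ‖y‖)
    (hSval : ∀ (x : E₁) (hK : x ∈ K.domain) (hR : x ∈ R.domain),
      S (R ⟨x, hR⟩) = K ⟨x, hK⟩) :
    ∀ y : R.domain, ∃ h : S (y : E₁) ∈ K.adjoint.domain,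
      K.adjoint ⟨S (y : E₁), h⟩ = R y := by
  intro y
  refine hclosed.exists_adjoint_apply_eq hdense fun d hd => ?_
  obtain ⟨hR, -⟩ := (hdom d).mpr ⟨d.2, hd⟩
  calc ⟪(R y : E₁), (d : E₁)⟫_ℝ
      = ⟪(y : E₁), R ⟨d, hR⟩⟫_ℝ := hRsa.isFormalAdjoint y ⟨d, hR⟩
    _ = ⟪S y, S (R ⟨d, hR⟩)⟫_ℝ :=
      ((⟨S.toLinearMap, hSiso⟩ : E₁ →ₗᵢ[ℝ] E₂).inner_map_map _ _).symm
    _ = ⟪S y, K d⟫_ℝ := by rw [hSval d d.2 hR]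

/-- Let `K` be a densely defined closed operator from `E₁` to `E₂` with trivial
kernel, `R = (K*K)^{1/2}` and `S` the isometric closure of `K ∘ R⁻¹ = K (K*K)^{-1/2}`.  Then for
every `x` in the domain of `(K*K)^{-1/2}` (i.e. `x = R y`) one has `K* S (K*K)^{-1/2} x = x`,
that is `K* (S y) = R y` for every `y ∈ dom R`. -/
theorem adjoint_comp_isometry_inv_sqrt
    {E₁ E₂ : Type*}
    [NormedAddCommGroup E₁] [InnerProductSpace ℝ E₁] [CompleteSpace E₁]
    [NormedAddCommGroup E₂] [InnerProductSpace ℝ E₂] [CompleteSpace E₂]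
    (K : E₁ →ₗ.[ℝ] E₂)
    (hdense : Dense (K.domain : Set E₁))
    (hclosed : K.IsClosed)
    (hker : ∀ (x : K.domain), K x = 0 → (x : E₁) = 0)
    -- `R` plays the role of `(K*K)^{1/2}` :
    (R : E₁ →ₗ.[ℝ] E₁)
    (hRsa : IsSelfAdjoint R)
    (hRpos : ∀ x : R.domain, 0 ≤ ⟪R x, (x : E₁)⟫_ℝ)
    (hdom : ∀ x : E₁,
      (∃ h : x ∈ R.domain, R ⟨x, h⟩ ∈ R.domain) ↔
      (∃ h : x ∈ K.domain, K ⟨x, h⟩ ∈ K.adjoint.domain))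
    (hval : ∀ (x : E₁) (hR : x ∈ R.domain) (hR2 : R ⟨x, hR⟩ ∈ R.domain)
      (hK : x ∈ K.domain) (hK2 : K ⟨x, hK⟩ ∈ K.adjoint.domain),
      R ⟨R ⟨x, hR⟩, hR2⟩ = K.adjoint ⟨K ⟨x, hK⟩, hK2⟩)
    -- `S` is the isometric closure of `K ∘ R⁻¹` :
    (S : E₁ →L[ℝ] E₂)
    (hSiso : ∀ y : E₁, ‖S y‖ = ‖y‖)
    (hSval : ∀ (x : E₁) (hK : x ∈ K.domain) (hR : x ∈ R.domain),
      S (R ⟨x, hR⟩) = K ⟨x, hK⟩) :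
    ∀ y : R.domain, ∃ h : S (y : E₁) ∈ K.adjoint.domain,
      K.adjoint ⟨S (y : E₁), h⟩ = R y :=
  adjoint_comp_isometry_inv_sqrt_general K hdense hclosed R hRsa hdom S hSiso hSval
end

section
/- Let K be a self-adjoint Hilbert–Schmidt operator on an infinite-dimensional separable Hilbert space E with trivial kernel, with spectral projections e_K({λ}) for eigenvalues λ. Define g'₁(K) = Σ_{λ∈σ(K), λ≠0} λ h(K,λ), where h(K,λ) is the sum of an orthonormal basis of the eigenspace e_K({λ})E. Then g'₁(K) does not lie in the range of K. -/
/-!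
If `g'₁(K) = K x`, then pairing with the eigenvector `h m` and using the symmetry of `K` gives
`⟪h m, x⟫ = ‖h m‖²`. Since the `h m` are pairwise orthogonal, Cauchy–Schwarz bounds every
finite partial sum of `‖h m‖² = dim e_K({λ_m})E` by `‖x‖²`. These are natural numbers, so only
finitely many eigenspaces are nonzero. By the spectral theorem for compact self-adjoint
operators, an injective such operator is the orthogonal sum of its eigenspaces, all
finite-dimensional, so `E` would be finite-dimensional.
-/

open Module Module.End
open scoped RealInnerProductSpace

theorem finite_setOf_ne_zero_of_summable_natCast {ι : Type*} {f : ι → ℕ}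
    (hf : Summable fun i => (f i : ℝ)) : {i | f i ≠ 0}.Finite := by
  have hsmall : ∀ᶠ i in Filter.cofinite, (f i : ℝ) < 1 :=
    hf.tendsto_cofinite_zero.eventually (gt_mem_nhds one_pos)
  simpa [Nat.cast_lt_one] using Filter.eventually_cofinite.mp hsmall

section RealInnerProductSpace

variable {ι E : Type*} [NormedAddCommGroup E] [InnerProductSpace ℝ E]

theorem summable_norm_sq_of_inner_eq_norm_sq {v : ι → E}
    (horth : Pairwise fun i j => ⟪v i, v j⟫ = 0) {x : E}
    (hx : ∀ i, ⟪v i, x⟫ = ‖v i‖ ^ 2) : Summable fun i => ‖v i‖ ^ 2 := by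
  refine summable_of_sum_le (c := ‖x‖ ^ 2) (fun i => by positivity) fun s => ?_
  set y := ∑ i ∈ s, v i
  have hyy : ‖y‖ ^ 2 = ∑ i ∈ s, ‖v i‖ ^ 2 := by
    rw [← real_inner_self_eq_norm_sq, sum_inner]
    refine Finset.sum_congr rfl fun i hi => ?_
    rw [inner_sum, Finset.sum_eq_single i (fun j _ hji => horth hji.symm) (by simp [hi]),
      real_inner_self_eq_norm_sq]
  have hyx : ⟪y, x⟫ = ∑ i ∈ s, ‖v i‖ ^ 2 := by
    simp only [y, sum_inner, hx]
  have hle : ‖y‖ ^ 2 ≤ ‖y‖ * ‖x‖ := hyy ▸ hyx ▸ real_inner_le_norm y x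
  have hy : ‖y‖ ≤ ‖x‖ := by nlinarith [norm_nonneg y, norm_nonneg x]
  rw [← hyy]
  exact pow_le_pow_left₀ (norm_nonneg y) hy 2

theorem inner_eq_norm_sq_of_hasSum_smul_eigenvectors {T : E →L[ℝ] E}
    (hT : (T : E →ₗ[ℝ] E).IsSymmetric) {lam : ι → ℝ} (hlam : ∀ i, lam i ≠ 0) {v : ι → E}
    (hv : ∀ i, v i ∈ eigenspace (T : E →ₗ[ℝ] E) (lam i))
    (horth : Pairwise fun i j => ⟪v i, v j⟫ = 0) {x : E}
    (hx : HasSum (fun i => lam i • v i) (T x)) (i : ι) : ⟪v i, x⟫ = ‖v i‖ ^ 2 := by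
  have hpair : HasSum (fun j => ⟪v i, lam j • v j⟫) ⟪v i, T x⟫ := hx.mapL (innerSL ℝ (v i))
  have hsingle : HasSum (fun j => ⟪v i, lam j • v j⟫) (lam i * ‖v i‖ ^ 2) := by
    have := hasSum_single (f := fun j => ⟪v i, lam j • v j⟫) i fun j hji => by
      rw [real_inner_smul_right, horth hji.symm, mul_zero]
    rwa [real_inner_smul_right, real_inner_self_eq_norm_sq] at this
  have hTv : T (v i) = lam i • v i := mem_eigenspace_iff.mp (hv i)
  have hsym : ⟪v i, T x⟫ = lam i * ⟪v i, x⟫ := by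
    rw [← hT.apply_clm, hTv, real_inner_smul_left]
  exact mul_left_cancel₀ (hlam i) (hsym ▸ hpair.unique hsingle)

end RealInnerProductSpace

namespace ContinuousLinearMap

variable {𝕜 E : Type*} [RCLike 𝕜] [NormedAddCommGroup E] [InnerProductSpace 𝕜 E]

theorem ne_zero_of_hasEigenvalue_of_injective {T : E →L[𝕜] E} (hT : Function.Injective T)
    {μ : 𝕜} (hμ : HasEigenvalue (T : End 𝕜 E) μ) : μ ≠ 0 := by
  rintro rfl
  obtain ⟨v, hv⟩ := hμ.exists_hasEigenvector
  exact hv.2 (hT (by simpa using hv.apply_eq_smul))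

theorem finiteDimensional_of_finite_hasEigenvalue [CompleteSpace E] {T : E →L[𝕜] E}
    (hT : IsCompactOperator T) (hT' : (T : E →ₗ[𝕜] E).IsSymmetric) (hinj : Function.Injective T)
    (hfin : {μ | HasEigenvalue (T : End 𝕜 E) μ}.Finite) : FiniteDimensional 𝕜 E := by
  set S := {μ | HasEigenvalue (T : End 𝕜 E) μ}
  have : Finite S := hfin.to_subtype
  have : ∀ μ : S, FiniteDimensional 𝕜 (eigenspace (T : End 𝕜 E) μ) := fun μ =>
    finite_dimensional_eigenspace hT μ (ne_zero_of_hasEigenvalue_of_injective hinj μ.2)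
  have hsup : ⨆ μ : S, eigenspace (T : End 𝕜 E) μ = ⨆ μ, eigenspace (T : End 𝕜 E) μ := by
    refine le_antisymm (iSup_le fun μ => le_iSup _ (μ : 𝕜)) (iSup_le fun μ => ?_)
    by_cases hμ : HasEigenvalue (T : End 𝕜 E) μ
    · exact le_iSup (fun μ : S => eigenspace (T : End 𝕜 E) μ) ⟨μ, hμ⟩
    · rw [hasEigenvalue_iff, not_not] at hμ
      simp [hμ]
  have htop : ⨆ μ : S, eigenspace (T : End 𝕜 E) μ = ⊤ := by
    rw [← Submodule.orthogonal_eq_bot_iff, hsup]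
    exact orthogonalComplement_iSup_eigenspaces_eq_bot hT hT'
  exact Module.finite_def.mpr (htop ▸ Module.Finite.iff_fg.mp inferInstance)

end ContinuousLinearMap

open ContinuousLinearMap

theorem eigen_sum_not_mem_range_general
    {E : Type*} [NormedAddCommGroup E] [InnerProductSpace ℝ E] [CompleteSpace E]
    (hE : ¬ FiniteDimensional ℝ E)
    (K : E →L[ℝ] E)
    (hsa : IsSelfAdjoint K)
    (hcompact : IsCompactOperator K)
    (hker : Function.Injective K)
    (lam : ℕ → ℝ)
    (hlam_ne : ∀ n, lam n ≠ 0)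
    (hlam_inj : Function.Injective lam)
    -- the `lam n` exhaust the nonzero eigenvalues of `K` :
    (hcomplete : ∀ μ : ℝ, μ ≠ 0 →
      Module.End.eigenspace (K : E →ₗ[ℝ] E) μ ≠ ⊥ → ∃ n, lam n = μ)
    (h : ℕ → E)
    (hmem : ∀ n, h n ∈ Module.End.eigenspace (K : E →ₗ[ℝ] E) (lam n))
    (hnorm : ∀ n, ‖h n‖ ^ 2 =
      (Module.finrank ℝ (Module.End.eigenspace (K : E →ₗ[ℝ] E) (lam n)) : ℝ))
    -- the series defining `g'₁(K)` converges :
    (hconv : Summable (fun n => lam n • h n)) :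
    (∑' n, lam n • h n) ∉ Set.range K := by
  rintro ⟨x, hx⟩
  have hsym := hsa.isSymmetric
  have horth : Pairwise fun m n => ⟪h m, h n⟫ = 0 := fun m n hmn =>
    hsym.orthogonalFamily_eigenspaces (hlam_inj.ne hmn) ⟨h m, hmem m⟩ ⟨h n, hmem n⟩
  have hinner := inner_eq_norm_sq_of_hasSum_smul_eigenvectors hsym hlam_ne hmem horth
    (hx ▸ hconv.hasSum)
  have hrank : Summable fun n => (finrank ℝ (eigenspace (K : E →ₗ[ℝ] E) (lam n)) : ℝ) := by
    simpa only [hnorm] using summable_norm_sq_of_inner_eq_norm_sq horth hinner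
  have hnonzero : {n | eigenspace (K : E →ₗ[ℝ] E) (lam n) ≠ ⊥}.Finite := by
    refine (finite_setOf_ne_zero_of_summable_natCast hrank).subset fun n hn hrank_zero => hn ?_
    have := finite_dimensional_eigenspace hcompact (lam n) (hlam_ne n)
    exact Submodule.finrank_eq_zero.mp hrank_zero
  refine hE (finiteDimensional_of_finite_hasEigenvalue hcompact hsym hker
    ((hnonzero.image lam).subset fun μ hμ => ?_))
  obtain ⟨n, rfl⟩ := hcomplete μ (ne_zero_of_hasEigenvalue_of_injective hker hμ)
    (hasEigenvalue_iff.mp hμ)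
  exact ⟨n, hasEigenvalue_iff.mp hμ, rfl⟩

/-- Let `K` be a self-adjoint Hilbert–Schmidt operator with trivial kernel on an
infinite-dimensional separable Hilbert space `E`, with (distinct, nonzero) eigenvalues `lam n`
exhausting the nonzero spectrum, each of finite multiplicity, and let `h n` be the sum of an
orthonormal basis of the `lam n`-eigenspace (so `h n` lies in the eigenspace and
`‖h n‖² = dim(eigenspace)`).  Then `g'₁(K) = Σ_n lam n • h n` does not lie in the range of `K`. -/
theorem eigen_sum_not_mem_range
    {E : Type*} [NormedAddCommGroup E] [InnerProductSpace ℝ E] [CompleteSpace E]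
    [TopologicalSpace.SeparableSpace E]
    (hE : ¬ FiniteDimensional ℝ E)
    (K : E →L[ℝ] E)
    (hsa : IsSelfAdjoint K)
    (hcompact : IsCompactOperator K)
    (hker : Function.Injective K)
    (lam : ℕ → ℝ)
    (hlam_ne : ∀ n, lam n ≠ 0)
    (hlam_inj : Function.Injective lam)
    -- the `lam n` exhaust the nonzero eigenvalues of `K` :
    (hcomplete : ∀ μ : ℝ, μ ≠ 0 →
      Module.End.eigenspace (K : E →ₗ[ℝ] E) μ ≠ ⊥ → ∃ n, lam n = μ)
    (hfin : ∀ n, FiniteDimensional ℝ (Module.End.eigenspace (K : E →ₗ[ℝ] E) (lam n)))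
    (h : ℕ → E)
    (hmem : ∀ n, h n ∈ Module.End.eigenspace (K : E →ₗ[ℝ] E) (lam n))
    (hnorm : ∀ n, ‖h n‖ ^ 2 =
      (Module.finrank ℝ (Module.End.eigenspace (K : E →ₗ[ℝ] E) (lam n)) : ℝ))
    -- `K` is Hilbert–Schmidt :
    (hHS : Summable (fun n => (lam n) ^ 2 *
      (Module.finrank ℝ (Module.End.eigenspace (K : E →ₗ[ℝ] E) (lam n)) : ℝ)))
    -- the series defining `g'₁(K)` converges :
    (hconv : Summable (fun n => lam n • h n)) :
    (∑' n, lam n • h n) ∉ Set.range K :=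
  eigen_sum_not_mem_range_general hE K hsa hcompact hker lam hlam_ne hlam_inj hcomplete h hmem hnorm
    hconv
end
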